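/- Soundness of k-complete families (second inequality of Lemma 12): suppose F'ᵢ satisfies |F'ᵢ| = |Fᵢ|, d_H(Fᵢ,F'ᵢ) − ½·#_$(F'ᵢ) ≤ dᵢ (for i = 1,2, with dᵢ half-integers) and ⌊d₁+d₂⌋ ≤ d. Then LCP(F'₁,F'₂) ≤ LCP_d(F₁,F₂). -/

import Mathlib

/-- Hamming distance between the aligned parts of two lists. -/
def hdistL {α : Type*} [DecidableEq α] (A B : List α) : ℕ :=
  (A.zip B).countP (fun pr => decide (pr.1 ≠ pr.2))

/-- Longest common prefix with at most `d` mismatches. -/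
def LCPd {α : Type*} [DecidableEq α] (d : ℕ) (U V : List α) : ℕ :=
  Nat.findGreatest (fun p => hdistL (U.take p) (V.take p) ≤ d) (min U.length V.length)

/-- Number of wildcard symbols `$` (encoded as `none`) in a string over `Σ ∪ {$}`. -/
def countDollar {α : Type*} (P : List (Option α)) : ℕ :=
  P.countP (fun x => x.isNone)

/-- `(U,V)_d`-pair: strings `U', V'` over `Σ ∪ {$}` (letter `a` is `some a`, `$` is `none`)
such that `|U'| = |U|`, `|V'| = |V|`; at every position `i` beyond `LCP_d(U,V)` or where
`U[i] = V[i]` we have `U'[i] = U[i]` and `V'[i] = V[i]`; and at the remaining positions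
(`i < LCP_d(U,V)` with `U[i] ≠ V[i]`) we have `U'[i] = V'[i] ∈ {U[i], V[i], $}`.
(Positions are 0-indexed, so `i ≥ LCP_d(U,V)` corresponds to 1-indexed `i > LCP_d(U,V)`.) -/
def IsPairD {α : Type*} [DecidableEq α] (d : ℕ) (U V : List α)
    (U' V' : List (Option α)) : Prop :=
  U'.length = U.length ∧ V'.length = V.length ∧
  (∀ i : ℕ, (LCPd d U V ≤ i ∨ U[i]? = V[i]?) →
      U'[i]? = (U[i]?).map some ∧ V'[i]? = (V[i]?).map some) ∧
  (∀ i : ℕ, i < LCPd d U V → U[i]? ≠ V[i]? →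
      U'[i]? = V'[i]? ∧
      (U'[i]? = (U[i]?).map some ∨ U'[i]? = (V[i]?).map some ∨ U'[i]? = some none))

/-!
Let `p = LCP(F₁', F₂')`, so that `F₁'` and `F₂'` share the prefix `P` of length `p`. At each
position the triangle inequality through `P` holds, and is off by one where `P` has a `$` (which
matches neither `F₁` nor `F₂`); summing, `d_H(F₁[..p], F₂[..p]) + #$(P) ≤ d_H(F₁[..p], P) +
d_H(F₂[..p], P)`. Outside the prefix every `$` of `F'ᵢ` is a mismatch with `Fᵢ`, so
`d_H(Fᵢ[..p], P) - #$(P) ≤ d_H(Fᵢ, F'ᵢ) - #$(F'ᵢ)`. As `#$(P)` is at most both `#$(F'ᵢ)`,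
`d_H(F₁[..p], F₂[..p]) ≤ d₁ + d₂`, and since the left side is an integer it is at most
`⌊d₁ + d₂⌋ ≤ d`.
-/

section Hamming

variable {α : Type*} [DecidableEq α]

@[simp]
lemma hdistL_cons (a b : α) (A B : List α) :
    hdistL (a :: A) (b :: B) = hdistL A B + if a = b then 0 else 1 := by
  by_cases h : a = b <;> simp [hdistL, h]

lemma hdistL_append {A B C D : List α} (h : A.length = C.length) :
    hdistL (A ++ B) (C ++ D) = hdistL A C + hdistL B D := by
  simp only [hdistL, List.zip_append h, List.countP_append]

lemma eq_of_hdistL_eq_zero :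
    ∀ {A B : List α}, A.length = B.length → hdistL A B = 0 → A = B
  | [], [], _, _ => rfl
  | a :: A, b :: B, hlen, h0 => by
    rw [hdistL_cons] at h0
    have hab : a = b := by by_contra hne; simp [hne] at h0
    rw [hab, eq_of_hdistL_eq_zero (A := A) (B := B) (by simpa using hlen) (by omega)]

lemma take_LCPd_zero_eq (U V : List α) :
    U.take (LCPd 0 U V) = V.take (LCPd 0 U V) := by
  have hmin : LCPd 0 U V ≤ min U.length V.length := Nat.findGreatest_le _
  refine eq_of_hdistL_eq_zero (by simp; omega) (Nat.le_zero.mp ?_)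
  exact Nat.findGreatest_spec (P := fun p => hdistL (U.take p) (V.take p) ≤ 0)
    (Nat.zero_le _) (by simp [hdistL])

lemma le_LCPd {d p : ℕ} {U V : List α} (hp : p ≤ min U.length V.length)
    (h : hdistL (U.take p) (V.take p) ≤ d) : p ≤ LCPd d U V :=
  Nat.le_findGreatest hp h

end Hamming

section Wildcard

variable {α : Type*}

@[simp]
lemma countDollar_cons (x : Option α) (P : List (Option α)) :
    countDollar (x :: P) = countDollar P + if x = none then 1 else 0 := by
  cases x <;> simp [countDollar]

lemma countDollar_append (P Q : List (Option α)) :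
    countDollar (P ++ Q) = countDollar P + countDollar Q :=
  List.countP_append

lemma countDollar_take_le (P : List (Option α)) (p : ℕ) :
    countDollar (P.take p) ≤ countDollar P :=
  (List.take_sublist p P).countP_le

variable [DecidableEq α]

lemma countDollar_le_hdistL :
    ∀ {F : List α} {F' : List (Option α)}, F'.length ≤ F.length →
      countDollar F' ≤ hdistL (F.map some) F'
  | _, [], _ => by simp [countDollar]
  | a :: F, x :: F', hlen => by
    have ih := countDollar_le_hdistL (F := F) (F' := F') (by simpa using hlen)
    simp only [List.map_cons, hdistL_cons, countDollar_cons]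
    cases x with
    | none => simp only [reduceCtorEq, if_true, if_false]; omega
    | some b => simp only [reduceCtorEq, if_false]; split_ifs <;> omega

lemma mismatch_add_dollar_le (x y : α) (c : Option α) :
    ((if x = y then 0 else 1) + if c = none then 1 else 0) ≤
      (if some x = c then 0 else 1) + if some y = c then 0 else 1 := by
  cases c <;> split_ifs <;> simp_all

lemma hdistL_add_countDollar_le :
    ∀ {X Y : List α} {P : List (Option α)}, X.length = P.length → Y.length = P.length →
      hdistL X Y + countDollar P ≤ hdistL (X.map some) P + hdistL (Y.map some) P
  | [], [], [], _, _ => by simp [hdistL, countDollar]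
  | x :: X, y :: Y, c :: P, hX, hY => by
    have ih := hdistL_add_countDollar_le (X := X) (Y := Y) (P := P)
      (by simpa using hX) (by simpa using hY)
    have := mismatch_add_dollar_le x y c
    simp only [List.map_cons, hdistL_cons, countDollar_cons]
    omega
  | [], _ :: _, _, hX, hY | _ :: _, [], _, hX, hY => by simp at hX hY; omega

lemma hdistL_take_sub_countDollar_take_le {F : List α} {F' : List (Option α)}
    (hlen : F'.length = F.length) (p : ℕ) :
    (hdistL ((F.take p).map some) (F'.take p) : ℤ) - countDollar (F'.take p) ≤
      hdistL (F.map some) F' - countDollar F' := by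
  have hsplit : hdistL (F.map some) F' =
      hdistL ((F.take p).map some) (F'.take p) + hdistL ((F.drop p).map some) (F'.drop p) := by
    rw [← hdistL_append (by simp [hlen]), ← List.map_append, List.take_append_drop,
      List.take_append_drop]
  have hdollars : countDollar F' = countDollar (F'.take p) + countDollar (F'.drop p) := by
    rw [← countDollar_append, List.take_append_drop]
  have hsuffix := countDollar_le_hdistL (F := F.drop p) (F' := F'.drop p) (by simp [hlen])
  omega

lemma hdistL_take_le_of_take_eq {F₁ F₂ : List α} {F₁' F₂' : List (Option α)}
    (hl₁ : F₁'.length = F₁.length) (hl₂ : F₂'.length = F₂.length) {p : ℕ}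
    (htake : F₁'.take p = F₂'.take p) :
    (hdistL (F₁.take p) (F₂.take p) : ℚ) ≤
      ((hdistL (F₁.map some) F₁' : ℚ) - countDollar F₁' / 2) +
        ((hdistL (F₂.map some) F₂' : ℚ) - countDollar F₂' / 2) := by
  have htriangle := hdistL_add_countDollar_le (X := F₁.take p) (Y := F₂.take p)
    (P := F₁'.take p) (by simp [hl₁]) (by simp [htake, hl₂])
  have hprefix₁ := hdistL_take_sub_countDollar_take_le hl₁ p
  have hprefix₂ := hdistL_take_sub_countDollar_take_le hl₂ p
  have hdollar₁ := countDollar_take_le F₁' p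
  have hdollar₂ := countDollar_take_le F₂' p
  rw [← htake] at hprefix₂ hdollar₂
  have key : (2 * hdistL (F₁.take p) (F₂.take p) : ℤ) ≤
      (2 * hdistL (F₁.map some) F₁' - countDollar F₁') +
        (2 * hdistL (F₂.map some) F₂' - countDollar F₂') := by
    omega
  have := (Int.cast_le (R := ℚ)).mpr key
  push_cast at this
  linarith

end Wildcard

theorem kComplete_soundness_general {α : Type*} [DecidableEq α]
    (F₁ F₂ : List α) (F₁' F₂' : List (Option α)) (d₁ d₂ : ℚ) (d : ℕ)
    (hl₁ : F₁'.length = F₁.length) (hl₂ : F₂'.length = F₂.length)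
    (hd₁ : (hdistL (F₁.map some) F₁' : ℚ) - (countDollar F₁' : ℚ) / 2 ≤ d₁)
    (hd₂ : (hdistL (F₂.map some) F₂' : ℚ) - (countDollar F₂' : ℚ) / 2 ≤ d₂)
    (hfloor : ⌊d₁ + d₂⌋ ≤ (d : ℤ)) :
    LCPd 0 F₁' F₂' ≤ LCPd d F₁ F₂ := by
  set p := LCPd 0 F₁' F₂'
  have hp : p ≤ min F₁.length F₂.length := hl₁ ▸ hl₂ ▸ Nat.findGreatest_le _
  have hmismatch := hdistL_take_le_of_take_eq hl₁ hl₂ (take_LCPd_zero_eq F₁' F₂')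
  have hfloor' : (hdistL (F₁.take p) (F₂.take p) : ℤ) ≤ ⌊d₁ + d₂⌋ :=
    Int.le_floor.mpr (by push_cast; linarith)
  exact le_LCPd hp (by omega)

/-- soundness of `k`-complete families, second inequality of Lemma 12:
if `|F'ᵢ| = |Fᵢ|`, `d_H(Fᵢ,F'ᵢ) − ½·#_$(F'ᵢ) ≤ dᵢ` for half-integers `dᵢ` (i = 1,2) and
`⌊d₁ + d₂⌋ ≤ d`, then `LCP(F'₁,F'₂) ≤ LCP_d(F₁,F₂)`. -/
theorem kComplete_soundness {α : Type*} [DecidableEq α]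
    (F₁ F₂ : List α) (F₁' F₂' : List (Option α)) (d₁ d₂ : ℚ) (d : ℕ)
    (hl₁ : F₁'.length = F₁.length) (hl₂ : F₂'.length = F₂.length)
    (hhalf₁ : ∃ m : ℤ, d₁ = (m : ℚ) / 2) (hhalf₂ : ∃ m : ℤ, d₂ = (m : ℚ) / 2)
    (hd₁ : (hdistL (F₁.map some) F₁' : ℚ) - (countDollar F₁' : ℚ) / 2 ≤ d₁)
    (hd₂ : (hdistL (F₂.map some) F₂' : ℚ) - (countDollar F₂' : ℚ) / 2 ≤ d₂)
    (hfloor : ⌊d₁ + d₂⌋ ≤ (d : ℤ)) :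
    LCPd 0 F₁' F₂' ≤ LCPd d F₁ F₂ :=
  kComplete_soundness_general F₁ F₂ F₁' F₂' d₁ d₂ d hl₁ hl₂ hd₁ hd₂ hfloor
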